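/- Let G = (V,E) be a connected finite simple graph and B a 1-branch of G with umbrella ordering σ_B = b_1, …, b_{|B|} such that |B^R| ≥ 2k + 1, and let B_f be the set of the 2k + 1 last vertices of B^R according to σ_B. Then for every k-completion F of G there exist a k-completion F' of G with F' ⊆ F and a vertex b ∈ B_f such that, letting l' be the maximal index with b b_{l'} ∈ E and B_b = {b_1, …, b_{l'}}, the graph G + F' admits an umbrella ordering whose first |B_b| vertices are exactly b_1, …, b_{l'} in this order. -/

import Mathlib

open SimpleGraph Finset

variable {V : Type*}

/-- `f` is an (injective, hence linear) umbrella ordering of the graph `G`. -/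
def IsUmbrellaOrdering (G : SimpleGraph V) (f : V → ℕ) : Prop :=
  Function.Injective f ∧
    ∀ u v w : V, f u < f v → f v < f w → G.Adj u w → G.Adj u v ∧ G.Adj v w

/-- A graph is a proper interval graph iff it admits an umbrella ordering. -/
def IsProperIntervalGraph (G : SimpleGraph V) : Prop :=
  ∃ f : V → ℕ, IsUmbrellaOrdering G f

/-- The graph `G + F` obtained by adding the set `F` of pairs as edges. -/
def addEdges (G : SimpleGraph V) (F : Finset (Sym2 V)) : SimpleGraph V :=
  G ⊔ SimpleGraph.fromEdgeSet ↑F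

/-- `F` is a completion of `G`: a set of non-loop non-edges whose addition
makes `G` a proper interval graph. -/
def IsCompletion (G : SimpleGraph V) (F : Finset (Sym2 V)) : Prop :=
  (∀ e ∈ F, ¬ e.IsDiag) ∧ (∀ e ∈ F, e ∉ G.edgeSet) ∧
    IsProperIntervalGraph (addEdges G F)

/-- `F` is a `k`-completion of `G`. -/
def IsKCompletion (G : SimpleGraph V) (k : ℕ) (F : Finset (Sym2 V)) : Prop :=
  IsCompletion G F ∧ F.card ≤ k

/-- `uv` is an extremal edge of `G` with respect to the ordering `f`. -/
def IsExtremalEdge (G : SimpleGraph V) (f : V → ℕ) (u v : V) : Prop :=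
  G.Adj u v ∧ f u < f v ∧
    ∀ u' v' : V, G.Adj u' v' → f u' ≤ f u → f v ≤ f v' → u' = u ∧ v' = v

/-- `c` is the center and `l₁, l₂, l₃` the leaves of an induced claw of `G`. -/
def IsClaw (G : SimpleGraph V) (c l₁ l₂ l₃ : V) : Prop :=
  G.Adj c l₁ ∧ G.Adj c l₂ ∧ G.Adj c l₃ ∧
    ¬ G.Adj l₁ l₂ ∧ ¬ G.Adj l₁ l₃ ∧ ¬ G.Adj l₂ l₃ ∧ l₁ ≠ l₂ ∧ l₁ ≠ l₃ ∧ l₂ ≠ l₃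

/-- `a b c d` is an induced 4-cycle of `G` (in this cyclic order). -/
def IsInducedC4 (G : SimpleGraph V) (a b c d : V) : Prop :=
  G.Adj a b ∧ G.Adj b c ∧ G.Adj c d ∧ G.Adj d a ∧
    ¬ G.Adj a c ∧ ¬ G.Adj b d ∧ a ≠ c ∧ b ≠ d

/-- `x` belongs to some claw of `G` (as center or leaf). -/
def InClaw (G : SimpleGraph V) (x : V) : Prop :=
  ∃ a b c d, IsClaw G a b c d ∧ (x = a ∨ x = b ∨ x = c ∨ x = d)

/-- `x` belongs to some induced 4-cycle of `G`. -/
def InC4 (G : SimpleGraph V) (x : V) : Prop :=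
  ∃ a b c d, IsInducedC4 G a b c d ∧ (x = a ∨ x = b ∨ x = c ∨ x = d)

/-- `{x, y, z}` is an independent set of size 3 (a `3K₁`) of `G`. -/
def IsInd3 (G : SimpleGraph V) (x y z : V) : Prop :=
  x ≠ y ∧ x ≠ z ∧ y ≠ z ∧ ¬ G.Adj x y ∧ ¬ G.Adj x z ∧ ¬ G.Adj y z

/-- `x` belongs to some independent set of size 3 of `G`. -/
def InInd3 (G : SimpleGraph V) (x : V) : Prop := ∃ y z, IsInd3 G x y z

/-- `G` is sunflower-reduced (for the parameter `k`). -/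
def SunflowerReduced (G : SimpleGraph V) (k : ℕ) : Prop :=
  ∀ u v : V, u ≠ v → ¬ G.Adj u v →
    {w : V | ∃ c, IsClaw G c u v w}.ncard ≤ k ∧
    {e : Sym2 V | ∃ a b, e = s(a, b) ∧ IsInducedC4 G u a v b}.ncard ≤ k

/-- `u` and `v` are true twins of `G`: they have the same closed neighborhood. -/
def TrueTwins (G : SimpleGraph V) (u v : V) : Prop :=
  insert u (G.neighborSet u) = insert v (G.neighborSet v)

/-- `b : Fin p → V` enumerates a `K`-join of `G` whose complement is
partitioned into `N`, `L`, `R`, `C`. -/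
structure KJoinWith (G : SimpleGraph V) {p : ℕ} (b : Fin p → V)
    (N L R C : Set V) : Prop where
  inj : Function.Injective b
  clique : ∀ i j : Fin p, i ≠ j → G.Adj (b i) (b j)
  cover : ∀ v : V, v ∉ Set.range b → v ∈ N ∪ L ∪ R ∪ C
  disj : List.Pairwise Disjoint [Set.range b, N, L, R, C]
  nAdj : ∀ v ∈ N, ∀ i, G.Adj v (b i)
  cNotAdj : ∀ v ∈ C, ∀ i, ¬ G.Adj v (b i)
  lrAdj : ∀ v ∈ L ∪ R, ∃ i, G.Adj v (b i)
  lrNotAll : ∀ v ∈ L ∪ R, ∃ i, ¬ G.Adj v (b i)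
  rFirst : ∀ r ∈ R, ∀ i : Fin p, i.val = 0 → ¬ G.Adj r (b i)
  lLast : ∀ x ∈ L, ∀ i : Fin p, i.val = p - 1 → ¬ G.Adj x (b i)
  rMono : ∀ i j : Fin p, i.val + 1 = j.val → ∀ r ∈ R, G.Adj (b i) r → G.Adj (b j) r
  lMono : ∀ i j : Fin p, i.val + 1 = j.val → ∀ x ∈ L, G.Adj (b j) x → G.Adj (b i) x

/-- `B ⊆ V` is a `K`-join of `G`. -/
def IsKJoin (G : SimpleGraph V) (B : Set V) : Prop :=
  ∃ (p : ℕ) (b : Fin p → V) (N L R C : Set V),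
    Set.range b = B ∧ KJoinWith G b N L R C

/-- `B` is a clean `K`-join: none of its vertices belongs to a claw or an
induced 4-cycle of `G`. -/
def IsCleanKJoin (G : SimpleGraph V) (B : Set V) : Prop :=
  IsKJoin G B ∧ ∀ x ∈ B, ¬ InClaw G x ∧ ¬ InC4 G x

/-- `B ⊆ V` is a simple `K`-join of `G` (one of `L`, `R` is empty). -/
def IsSimpleKJoin (G : SimpleGraph V) (B : Set V) : Prop :=
  ∃ (p : ℕ) (b : Fin p → V) (N L R C : Set V),
    Set.range b = B ∧ KJoinWith G b N L R C ∧ (L = ∅ ∨ R = ∅)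

/-- `B` is bcc-clean: none of its vertices belongs to a `3K₁` or an induced
4-cycle of `G`. -/
def IsBccClean (G : SimpleGraph V) (B : Set V) : Prop :=
  ∀ x ∈ B, ¬ InInd3 G x ∧ ¬ InC4 G x

/-- `b : Fin p → V` enumerates (in umbrella order) a 1-branch of `G` with
complement partitioned into `R`, `C`; `b l` is the neighbor of the last
vertex `b (p-1)` of minimal index.  The attachment clique is
`B₁ = {b i : l ≤ i}` and `B^R = {b i : i < l}`. -/
structure OneBranch (G : SimpleGraph V) {p : ℕ} (b : Fin p → V)
    (R C : Set V) (l : Fin p) : Prop where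
  pos : 0 < p
  inj : Function.Injective b
  umbrella : ∀ i j m : Fin p, i < j → j < m → G.Adj (b i) (b m) →
    G.Adj (b i) (b j) ∧ G.Adj (b j) (b m)
  connB : (G.induce (Set.range b)).Connected
  cover : ∀ v : V, v ∉ Set.range b → v ∈ R ∪ C
  disj : List.Pairwise Disjoint [Set.range b, R, C]
  noBC : ∀ v ∈ C, ∀ i, ¬ G.Adj v (b i)
  rNbr : ∀ v ∈ R, ∃ i, G.Adj v (b i)
  lMin : ∀ j : Fin p, j < l → ¬ G.Adj (b j) (b ⟨p - 1, Nat.sub_lt pos Nat.one_pos⟩)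
  lNbr : l.val = p - 1 ∨ G.Adj (b l) (b ⟨p - 1, Nat.sub_lt pos Nat.one_pos⟩)
  noEarlyR : ∀ j : Fin p, j < l → ∀ r ∈ R, ¬ G.Adj r (b j)
  rMono : ∀ i j : Fin p, l ≤ i → i.val + 1 = j.val → ∀ r ∈ R,
    G.Adj (b i) r → G.Adj (b j) r

/-- `b : Fin p → V` enumerates (in umbrella order) a 2-branch of `G` with
complement partitioned into `L`, `R`, `C`; `b l` is the neighbor of `b (p-1)`
of minimal index and `b l'` is the neighbor of `b 0` of maximal index.  The
attachment cliques are `B₁ = {b i : i ≤ l'}` and `B₂ = {b i : l ≤ i}`, and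
`B^R = {b i : l' < i < l}`. -/
structure TwoBranch (G : SimpleGraph V) {p : ℕ} (b : Fin p → V)
    (L R C : Set V) (l l' : Fin p) : Prop where
  pos : 0 < p
  inj : Function.Injective b
  umbrella : ∀ i j m : Fin p, i < j → j < m → G.Adj (b i) (b m) →
    G.Adj (b i) (b j) ∧ G.Adj (b j) (b m)
  connB : (G.induce (Set.range b)).Connected
  cover : ∀ v : V, v ∉ Set.range b → v ∈ L ∪ R ∪ C
  disj : List.Pairwise Disjoint [Set.range b, L, R, C]
  noBC : ∀ v ∈ C, ∀ i, ¬ G.Adj v (b i)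
  lNbrEx : ∀ v ∈ L, ∃ i, G.Adj v (b i)
  rNbrEx : ∀ v ∈ R, ∃ i, G.Adj v (b i)
  lMin : ∀ j : Fin p, j < l → ¬ G.Adj (b j) (b ⟨p - 1, Nat.sub_lt pos Nat.one_pos⟩)
  lNbr : l.val = p - 1 ∨ G.Adj (b l) (b ⟨p - 1, Nat.sub_lt pos Nat.one_pos⟩)
  lMax' : ∀ j : Fin p, l' < j → ¬ G.Adj (b ⟨0, pos⟩) (b j)
  lNbr' : l'.val = 0 ∨ G.Adj (b ⟨0, pos⟩) (b l')
  noEarlyR : ∀ j : Fin p, j < l → ∀ r ∈ R, ¬ G.Adj r (b j)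
  noLateL : ∀ j : Fin p, l' < j → ∀ v ∈ L, ¬ G.Adj v (b j)
  rMono : ∀ i j : Fin p, l ≤ i → i.val + 1 = j.val → ∀ r ∈ R,
    G.Adj (b i) r → G.Adj (b j) r
  lMono : ∀ i j : Fin p, j ≤ l' → i.val + 1 = j.val → ∀ v ∈ L,
    G.Adj (b j) v → G.Adj (b i) v

/-- `e : Fin q → Fin p` lists the last indices of the `q` K-joins of the
K-join decomposition of the 2-branch enumerated by `b` (with attachment
cliques ending at `l'` resp. starting at `l`). -/
def KJoinDecomp (G : SimpleGraph V) {p : ℕ} (b : Fin p → V) (l l' : Fin p)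
    (q : ℕ) (e : Fin q → Fin p) : Prop :=
  0 < q ∧
  (∀ i : Fin q, i.val = 0 → e i = l') ∧
  (∀ i : Fin q, i.val = q - 1 → (e i).val = p - 1) ∧
  StrictMono e ∧
  ∀ i j : Fin q, i.val + 1 = j.val →
    ∃ hs : (e i).val + 1 < p,
      (j.val + 1 < q →
        (⟨(e i).val + 1, hs⟩ : Fin p) < l ∧
        G.Adj (b ⟨(e i).val + 1, hs⟩) (b (e j)) ∧
        ∀ m : Fin p, G.Adj (b ⟨(e i).val + 1, hs⟩) (b m) → m ≤ e j) ∧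
      (j.val + 1 = q → l ≤ (⟨(e i).val + 1, hs⟩ : Fin p))

/-- `G` is a bi-clique chain graph: two cliques joined by a join. -/
def IsBicliqueChain (G : SimpleGraph V) : Prop :=
  ∃ (q : ℕ) (x : Fin q → V) (Y : Set V),
    Function.Injective x ∧
    Disjoint (Set.range x) Y ∧
    (∀ v : V, v ∈ Set.range x ∨ v ∈ Y) ∧
    (∀ i j : Fin q, i ≠ j → G.Adj (x i) (x j)) ∧
    G.IsClique Y ∧
    (∀ i j : Fin q, i ≤ j → ∀ y ∈ Y, G.Adj (x i) y → G.Adj (x j) y)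

/-- `F` is a bcc-`k`-completion of `G`. -/
def IsBccKCompletion (G : SimpleGraph V) (k : ℕ) (F : Finset (Sym2 V)) : Prop :=
  (∀ e ∈ F, ¬ e.IsDiag) ∧ (∀ e ∈ F, e ∉ G.edgeSet) ∧ F.card ≤ k ∧
    IsBicliqueChain (addEdges G F)

/-!
Some vertex `b i` among the last `2k + 1` vertices of `B^R` lies on no pair of `F`, so its
neighbourhood in `G + F` is its neighbourhood in `G`, which is contained in the prefix
`P = {b 0, …, b l₂}`, `b l₂` being its last neighbour. Take an umbrella ordering `f` of
`G + F` with `b i` before `b l₂`. A vertex outside `P` cannot come before `b i`: the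
adjacencies leading from it to `b l₂` would have to cross `b i`, making some vertex outside `P`
a neighbour of `b i`. Keep only the fill edges outside `P` and those joining some `b s` to a
vertex `x ∉ P` that is adjacent in `G + F` to all of `b s, …, b l₂`. Listing `b 0, …, b l₂`
first and then the other vertices in the order of `f` is an umbrella ordering of `G` plus
these edges.
-/

theorem addEdges_adj {G : SimpleGraph V} {F : Finset (Sym2 V)} {u v : V} :
    (addEdges G F).Adj u v ↔ G.Adj u v ∨ (s(u, v) ∈ F ∧ u ≠ v) := by
  simp [addEdges, SimpleGraph.fromEdgeSet_adj]

theorem le_addEdges (G : SimpleGraph V) (F : Finset (Sym2 V)) : G ≤ addEdges G F :=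
  le_sup_left

theorem addEdges_mono (G : SimpleGraph V) {F' F : Finset (Sym2 V)} (h : F' ⊆ F) :
    addEdges G F' ≤ addEdges G F :=
  sup_le_sup_left (SimpleGraph.fromEdgeSet_mono (by exact_mod_cast h)) G

theorem adj_of_addEdges_adj {G : SimpleGraph V} {F : Finset (Sym2 V)} {u v : V}
    (hu : ∀ e ∈ F, u ∉ e) (h : (addEdges G F).Adj u v) : G.Adj u v := by
  rcases addEdges_adj.1 h with h | ⟨he, -⟩
  · exact h
  · exact absurd (Sym2.mem_mk_left u v) (hu _ he)

theorem IsKCompletion.of_subset {G : SimpleGraph V} {k : ℕ} {F' F : Finset (Sym2 V)}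
    (hF : IsKCompletion G k F) (h : F' ⊆ F) (hF' : IsProperIntervalGraph (addEdges G F')) :
    IsKCompletion G k F' :=
  ⟨⟨fun e he => hF.1.1 e (h he), fun e he => hF.1.2.1 e (h he), hF'⟩,
    (Finset.card_le_card h).trans hF.2⟩

/-- At most `2 * #F` vertices lie on the pairs of `F`. -/
theorem exists_mem_forall_notMem_of_card_lt (F : Finset (Sym2 V)) (S : Finset V)
    (h : 2 * F.card < S.card) : ∃ v ∈ S, ∀ e ∈ F, v ∉ e := by
  classical
  have hcard : (F.biUnion Sym2.toFinset).card ≤ 2 * F.card :=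
    calc (F.biUnion Sym2.toFinset).card ≤ ∑ e ∈ F, e.toFinset.card := Finset.card_biUnion_le
      _ ≤ ∑ _e ∈ F, 2 := Finset.sum_le_sum fun e _ => by
          rw [Sym2.card_toFinset]; split_ifs <;> omega
      _ = 2 * F.card := by rw [Finset.sum_const, smul_eq_mul, mul_comm]
  obtain ⟨v, hvS, hv⟩ := Finset.exists_mem_notMem_of_card_lt_card (hcard.trans_lt h)
  exact ⟨v, hvS, fun e he hve => hv (Finset.mem_biUnion.2 ⟨e, he, Sym2.mem_toFinset.2 hve⟩)⟩

theorem IsUmbrellaOrdering.exists_lt [Finite V] {G : SimpleGraph V} {f : V → ℕ}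
    (hf : IsUmbrellaOrdering G f) {u v : V} (huv : u ≠ v) :
    ∃ f' : V → ℕ, IsUmbrellaOrdering G f' ∧ f' u < f' v := by
  rcases lt_or_gt_of_ne (hf.1.ne huv) with h | h
  · exact ⟨f, hf, h⟩
  obtain ⟨M, hM⟩ := (Set.finite_range f).bddAbove
  have hM' : ∀ x, f x ≤ M := fun x => hM ⟨x, rfl⟩
  refine ⟨fun x => M - f x, ⟨fun x y hxy => hf.1 ?_, fun x y z hxy hyz hxz => ?_⟩, ?_⟩
  · have := hM' x; have := hM' y; simp only at hxy; omega
  · have := hM' x; have := hM' y; have := hM' z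
    simp only at hxy hyz
    obtain ⟨hzy, hyx⟩ := hf.2 z y x (by omega) (by omega) hxz.symm
    exact ⟨hyx.symm, hzy.symm⟩
  · have := hM' u; have := hM' v; simp only; omega

theorem IsUmbrellaOrdering.of_prefix {H : SimpleGraph V} {g : V → ℕ} (P : Set V)
    (hinj : Function.Injective g) (hlt : ∀ u ∈ P, ∀ v ∉ P, g u < g v)
    (hin : ∀ u v w, u ∈ P → v ∈ P → w ∈ P → g u < g v → g v < g w → H.Adj u w →
      H.Adj u v ∧ H.Adj v w)
    (hout : ∀ u v w, u ∉ P → v ∉ P → w ∉ P → g u < g v → g v < g w → H.Adj u w →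
      H.Adj u v ∧ H.Adj v w)
    (hmix : ∀ u v w, u ∈ P → w ∉ P → g u < g v → g v < g w → H.Adj u w →
      H.Adj u v ∧ H.Adj v w) :
    IsUmbrellaOrdering H g := by
  refine ⟨hinj, fun u v w huv hvw => ?_⟩
  by_cases hu : u ∈ P <;> by_cases hw : w ∈ P
  · have hv : v ∈ P := by_contra fun hv => (hlt w hw v hv).not_gt hvw
    exact hin u v w hu hv hw huv hvw
  · exact hmix u v w hu hw huv hvw
  · exact absurd (hlt w hw u hu) (by omega)
  · have hv : v ∉ P := fun hv => (hlt v hv u hu).not_gt huv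
    exact hout u v w hu hv hw huv hvw

namespace OneBranch

variable {G : SimpleGraph V} {p : ℕ} {b : Fin p → V} {R C : Set V} {l : Fin p}

theorem adj_of_le_of_lt_of_le (hB : OneBranch G b R C l) {i s t m : Fin p}
    (h : G.Adj (b i) (b m)) (his : i ≤ s) (hst : s < t) (htm : t ≤ m) :
    G.Adj (b s) (b t) := by
  have hit : G.Adj (b i) (b t) := by
    rcases htm.lt_or_eq with htm | rfl
    · exact (hB.umbrella i t m (his.trans_lt hst) htm h).1
    · exact h
  rcases his.lt_or_eq with his | rfl
  · exact (hB.umbrella i s t his hst hit).2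
  · exact hit

theorem exists_adj_gt (hB : OneBranch G b R C l) {i j : Fin p} (hij : i < j) :
    ∃ m, i < m ∧ G.Adj (b i) (b m) := by
  by_contra! hno
  obtain ⟨W⟩ := hB.connB.preconnected ⟨b i, i, rfl⟩ ⟨b j, j, rfl⟩
  obtain ⟨d, -, ⟨s, hsi, hs⟩, hout⟩ :=
    W.exists_boundary_dart {x | ∃ s ≤ i, b s = x.1} ⟨i, le_rfl, rfl⟩
      fun ⟨s, hsi, hs⟩ => (hB.inj hs ▸ hsi).not_gt hij
  obtain ⟨t, ht⟩ := d.snd.2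
  have hit : i < t := lt_of_not_ge fun hti => hout ⟨t, hti, ht⟩
  have hst : G.Adj (b s) (b t) := by
    rw [hs, ht]
    exact d.adj
  exact hno t hit (hB.adj_of_le_of_lt_of_le hst hsi hit le_rfl)

theorem adj_of_le_of_mem_R (hB : OneBranch G b R C l) {r : V} (hr : r ∈ R) {s t : Fin p}
    (hls : l ≤ s) (hst : s ≤ t) (h : G.Adj (b s) r) : G.Adj (b t) r := by
  obtain ⟨t, ht⟩ := t
  change s.val ≤ t at hst
  induction t, hst using Nat.le_induction with
  | base => exact h
  | succ n hsn ih =>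
    exact hB.rMono ⟨n, by omega⟩ ⟨n + 1, ht⟩ (hls.trans (Fin.le_def.2 hsn)) rfl r hr
      (ih (by omega))

theorem adj_of_le (hB : OneBranch G b R C l) {v : V} {s t : Fin p}
    (hv : v ∉ b '' Set.Iic t) (hst : s ≤ t) (h : G.Adj (b s) v) : G.Adj (b t) v := by
  by_cases hvB : v ∈ Set.range b
  · obtain ⟨m, rfl⟩ := hvB
    have htm : t < m := lt_of_not_ge fun hmt => hv ⟨m, hmt, rfl⟩
    rcases hst.lt_or_eq with hst | rfl
    · exact hB.adj_of_le_of_lt_of_le h hst.le htm le_rfl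
    · exact h
  rcases hB.cover v hvB with hR | hC
  · have hls : l ≤ s := le_of_not_gt fun hsl => hB.noEarlyR s hsl v hR h.symm
    exact hB.adj_of_le_of_mem_R hR hls hst h
  · exact absurd h.symm (hB.noBC v hC s)

theorem mem_range_of_adj (hB : OneBranch G b R C l) {i : Fin p} (hi : i < l) {x : V}
    (h : G.Adj (b i) x) : x ∈ Set.range b := by
  by_contra hx
  rcases hB.cover x hx with hR | hC
  · exact hB.noEarlyR i hi x hR h.symm
  · exact hB.noBC x hC i h.symm

end OneBranch

/-- For the vertex `b i`, `b l₂` is the paper's `b_{l'}` and `b '' Set.Iic l₂` is `B_{b i}`. -/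
structure IsLastNeighbor (G : SimpleGraph V) {p : ℕ} (b : Fin p → V) (i l₂ : Fin p) :
    Prop where
  lt : i < l₂
  adj : G.Adj (b i) (b l₂)
  mem_image : ∀ x, G.Adj (b i) x → x ∈ b '' Set.Iic l₂

section LastNeighbor

variable {G : SimpleGraph V} {p : ℕ} {b : Fin p → V} {R C : Set V} {l i l₂ : Fin p}
  {F : Finset (Sym2 V)} {f : V → ℕ}

theorem OneBranch.exists_isLastNeighbor (hB : OneBranch G b R C l) (hi : i < l) :
    ∃ l₂, IsLastNeighbor G b i l₂ := by
  classical
  have hlast : i < ⟨p - 1, by omega⟩ := by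
    have := l.isLt
    simp only [Fin.lt_def] at hi ⊢
    omega
  obtain ⟨m, him, hm⟩ := hB.exists_adj_gt hlast
  obtain ⟨l₂, hl₂, hmax⟩ := Finset.exists_max_image
    (Finset.univ.filter fun j => G.Adj (b i) (b j)) id ⟨m, by simpa using hm⟩
  simp only [Finset.mem_filter, Finset.mem_univ, true_and, id] at hl₂ hmax
  refine ⟨l₂, him.trans_le (hmax m hm), hl₂, fun x hx => ?_⟩
  obtain ⟨j, rfl⟩ := hB.mem_range_of_adj hi hx
  exact ⟨j, hmax j hx, rfl⟩

namespace IsLastNeighbor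

theorem le_of_adj (h : IsLastNeighbor G b i l₂) (hinj : Function.Injective b) {j : Fin p}
    (hj : G.Adj (b i) (b j)) : j ≤ l₂ := by
  obtain ⟨j', hj', he⟩ := h.mem_image _ hj
  exact hinj he ▸ hj'

theorem not_adj_addEdges (h : IsLastNeighbor G b i l₂) (hiF : ∀ e ∈ F, b i ∉ e) {v : V}
    (hv : v ∉ b '' Set.Iic l₂) : ¬ (addEdges G F).Adj (b i) v :=
  fun hadj => hv (h.mem_image v (adj_of_addEdges_adj hiF hadj))

theorem apply_lt_of_notMem (h : IsLastNeighbor G b i l₂) (hG : G.Connected)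
    (hB : OneBranch G b R C l) (hiF : ∀ e ∈ F, b i ∉ e)
    (hf : IsUmbrellaOrdering (addEdges G F) f) (hfi : f (b i) < f (b l₂)) {v : V}
    (hv : v ∉ b '' Set.Iic l₂) : f (b i) < f v := by
  by_contra! hle
  set Q := {u | u ∉ b '' Set.Iic l₂ ∧ f u < f (b i)}
  have hvQ : v ∈ Q := ⟨hv, hle.lt_of_ne fun he => hv ⟨i, h.lt.le, (hf.1 he).symm⟩⟩
  have hQ : ∀ u ∈ Q, ∀ w, f (b i) < f w → ¬ (addEdges G F).Adj u w := fun u hu w hw huw =>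
    h.not_adj_addEdges hiF hu.1 (hf.2 u (b i) w hu.2 hw huw).1.symm
  -- `Q` would be closed under adjacency, but it misses `b l₂`.
  obtain ⟨W⟩ := hG.preconnected v (b l₂)
  obtain ⟨d, -, hu, hz⟩ :=
    W.exists_boundary_dart Q hvQ fun hl => hl.1 ⟨l₂, Set.self_mem_Iic, rfl⟩
  rcases lt_trichotomy (f (b i)) (f d.snd) with hlt | heq | hgt
  · exact hQ _ hu _ hlt (le_addEdges G F d.adj)
  · exact hu.1 (h.mem_image _ ((hf.1 heq) ▸ d.adj.symm))
  · obtain ⟨c, hc, hcz⟩ : d.snd ∈ b '' Set.Iic l₂ := by_contra fun hzP => hz ⟨hzP, hgt⟩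
    have hcu : G.Adj (b c) d.fst := hcz ▸ d.adj.symm
    exact hQ _ hu _ hfi (le_addEdges G F (hB.adj_of_le hu.1 hc hcu).symm)

theorem apply_lt_of_notMem_of_le (h : IsLastNeighbor G b i l₂) (hG : G.Connected)
    (hB : OneBranch G b R C l) (hiF : ∀ e ∈ F, b i ∉ e)
    (hf : IsUmbrellaOrdering (addEdges G F) f) (hfi : f (b i) < f (b l₂)) {v : V}
    (hv : v ∉ b '' Set.Iic l₂) {s : Fin p} (his : i ≤ s) (hsl : s ≤ l₂) : f (b s) < f v := by
  have hiv := h.apply_lt_of_notMem hG hB hiF hf hfi hv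
  rcases his.lt_or_eq with his | rfl
  · by_contra! hle
    have hvs : f v < f (b s) := hle.lt_of_ne fun he => hv ⟨s, hsl, (hf.1 he).symm⟩
    have his' : (addEdges G F).Adj (b i) (b s) :=
      le_addEdges G F (hB.adj_of_le_of_lt_of_le h.adj le_rfl his hsl)
    exact h.not_adj_addEdges hiF hv (hf.2 _ v _ hiv hvs his').1
  · exact hiv

end IsLastNeighbor

end LastNeighbor

section Prefix

open Classical

variable {G : SimpleGraph V} {p : ℕ} {b : Fin p → V} {R C : Set V} {l i l₂ : Fin p}
  {F : Finset (Sym2 V)} {f : V → ℕ}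

noncomputable def pruneCompletion (G : SimpleGraph V) (b : Fin p → V) (l₂ : Fin p)
    (F : Finset (Sym2 V)) : Finset (Sym2 V) :=
  F.filter fun e => (∀ x ∈ e, x ∉ b '' Set.Iic l₂) ∨
    ∃ s ≤ l₂, ∃ x ∉ b '' Set.Iic l₂, e = s(b s, x) ∧
      ∀ t, s ≤ t → t ≤ l₂ → (addEdges G F).Adj (b t) x

theorem pruneCompletion_subset : pruneCompletion G b l₂ F ⊆ F :=
  Finset.filter_subset _ _

theorem adj_pruneCompletion_iff_of_notMem {u v : V} (hu : u ∉ b '' Set.Iic l₂)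
    (hv : v ∉ b '' Set.Iic l₂) :
    (addEdges G (pruneCompletion G b l₂ F)).Adj u v ↔ (addEdges G F).Adj u v := by
  refine ⟨fun h => addEdges_mono G pruneCompletion_subset h, fun h => ?_⟩
  rcases addEdges_adj.1 h with h | ⟨he, hne⟩
  · exact le_addEdges _ _ h
  refine addEdges_adj.2 (Or.inr ⟨Finset.mem_filter.2 ⟨he, Or.inl fun x hx => ?_⟩, hne⟩)
  rcases Sym2.mem_iff.1 hx with rfl | rfl
  exacts [hu, hv]

theorem adj_of_adj_pruneCompletion {s t : Fin p} (hs : s ≤ l₂) (ht : t ≤ l₂)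
    (h : (addEdges G (pruneCompletion G b l₂ F)).Adj (b s) (b t)) :
    G.Adj (b s) (b t) := by
  rcases addEdges_adj.1 h with h | ⟨he, -⟩
  · exact h
  rcases (Finset.mem_filter.1 he).2 with hout | ⟨s', -, x, hx, he', -⟩
  · exact absurd ⟨s, hs, rfl⟩ (hout _ (Sym2.mem_mk_left _ _))
  rcases Sym2.eq_iff.1 he' with ⟨-, rfl⟩ | ⟨rfl, -⟩
  · exact absurd ⟨t, ht, rfl⟩ hx
  · exact absurd ⟨s, hs, rfl⟩ hx

theorem OneBranch.adj_pruneCompletion_iff (hB : OneBranch G b R C l) {s : Fin p}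
    (hs : s ≤ l₂) {x : V} (hx : x ∉ b '' Set.Iic l₂) :
    (addEdges G (pruneCompletion G b l₂ F)).Adj (b s) x ↔
      ∀ t, s ≤ t → t ≤ l₂ → (addEdges G F).Adj (b t) x := by
  constructor
  · intro h t hst htl
    rcases addEdges_adj.1 h with h | ⟨he, -⟩
    · have hxt : x ∉ b '' Set.Iic t := fun hxt =>
        hx (Set.image_mono (Set.Iic_subset_Iic.2 htl) hxt)
      exact le_addEdges G F (hB.adj_of_le hxt hst h)
    rcases (Finset.mem_filter.1 he).2 with hout | ⟨s', -, x', hx', he', hall⟩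
    · exact absurd ⟨s, hs, rfl⟩ (hout _ (Sym2.mem_mk_left _ _))
    rcases Sym2.eq_iff.1 he' with ⟨hss', rfl⟩ | ⟨rfl, -⟩
    · exact hall t (hB.inj hss' ▸ hst) htl
    · exact absurd ⟨s, hs, rfl⟩ hx'
  · intro hall
    rcases addEdges_adj.1 (hall s le_rfl hs) with h | ⟨he, hne⟩
    · exact le_addEdges _ _ h
    exact addEdges_adj.2
      (Or.inr ⟨Finset.mem_filter.2 ⟨he, Or.inr ⟨s, hs, x, hx, rfl, hall⟩⟩, hne⟩)

noncomputable def prefixOrder (b : Fin p → V) (l₂ : Fin p) (f : V → ℕ) (v : V) : ℕ :=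
  if h : v ∈ b '' Set.Iic l₂ then h.choose else p + f v

theorem prefixOrder_apply (hinj : Function.Injective b) {s : Fin p} (hs : s ≤ l₂) :
    prefixOrder b l₂ f (b s) = s := by
  have h : b s ∈ b '' Set.Iic l₂ := ⟨s, hs, rfl⟩
  rw [prefixOrder, dif_pos h, hinj h.choose_spec.2]

theorem prefixOrder_of_notMem {v : V} (hv : v ∉ b '' Set.Iic l₂) :
    prefixOrder b l₂ f v = p + f v :=
  dif_neg hv

theorem prefixOrder_lt (hinj : Function.Injective b) {s : Fin p} (hs : s ≤ l₂) {v : V}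
    (hv : v ∉ b '' Set.Iic l₂) : prefixOrder b l₂ f (b s) < prefixOrder b l₂ f v := by
  rw [prefixOrder_apply hinj hs, prefixOrder_of_notMem hv]
  omega

theorem prefixOrder_injective (hinj : Function.Injective b) (hf : Function.Injective f) :
    Function.Injective (prefixOrder b l₂ f) := by
  intro u v huv
  by_cases hu : u ∈ b '' Set.Iic l₂ <;> by_cases hv : v ∈ b '' Set.Iic l₂
  · obtain ⟨s, hs, rfl⟩ := hu
    obtain ⟨t, ht, rfl⟩ := hv
    rw [prefixOrder_apply hinj hs, prefixOrder_apply hinj ht] at huv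
    rw [Fin.val_injective huv]
  · obtain ⟨s, hs, rfl⟩ := hu
    exact absurd huv (prefixOrder_lt hinj hs hv).ne
  · obtain ⟨t, ht, rfl⟩ := hv
    exact absurd huv (prefixOrder_lt hinj ht hu).ne'
  · rw [prefixOrder_of_notMem hu, prefixOrder_of_notMem hv] at huv
    exact hf (by omega)

theorem IsLastNeighbor.isUmbrellaOrdering_prefixOrder (h : IsLastNeighbor G b i l₂)
    (hG : G.Connected) (hB : OneBranch G b R C l) (hiF : ∀ e ∈ F, b i ∉ e)
    (hf : IsUmbrellaOrdering (addEdges G F) f) (hfi : f (b i) < f (b l₂)) :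
    IsUmbrellaOrdering (addEdges G (pruneCompletion G b l₂ F)) (prefixOrder b l₂ f) := by
  refine .of_prefix (b '' Set.Iic l₂) (prefixOrder_injective hB.inj hf.1)
    (by rintro _ ⟨s, hs, rfl⟩ v hv; exact prefixOrder_lt hB.inj hs hv) ?_ ?_ ?_
  · rintro _ _ _ ⟨a, ha, rfl⟩ ⟨c, hc, rfl⟩ ⟨d, hd, rfl⟩ hac hcd had
    rw [prefixOrder_apply hB.inj ha, prefixOrder_apply hB.inj hc] at hac
    rw [prefixOrder_apply hB.inj hc, prefixOrder_apply hB.inj hd] at hcd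
    obtain ⟨h₁, h₂⟩ := hB.umbrella a c d hac hcd (adj_of_adj_pruneCompletion ha hd had)
    exact ⟨le_addEdges _ _ h₁, le_addEdges _ _ h₂⟩
  · intro u v w hu hv hw huv hvw huw
    rw [prefixOrder_of_notMem hu, prefixOrder_of_notMem hv] at huv
    rw [prefixOrder_of_notMem hv, prefixOrder_of_notMem hw] at hvw
    rw [adj_pruneCompletion_iff_of_notMem hu hw] at huw
    rw [adj_pruneCompletion_iff_of_notMem hu hv, adj_pruneCompletion_iff_of_notMem hv hw]
    exact hf.2 u v w (by omega) (by omega) huw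
  · rintro _ v w ⟨a, ha, rfl⟩ hw hav hvw haw
    rw [hB.adj_pruneCompletion_iff ha hw] at haw
    have hia : i < a := lt_of_not_ge fun hai => h.not_adj_addEdges hiF hw (haw i hai h.lt.le)
    by_cases hv : v ∈ b '' Set.Iic l₂
    · obtain ⟨c, hc, rfl⟩ := hv
      rw [prefixOrder_apply hB.inj ha, prefixOrder_apply hB.inj hc] at hav
      exact ⟨le_addEdges _ _ (hB.adj_of_le_of_lt_of_le h.adj hia.le hav hc),
        (hB.adj_pruneCompletion_iff hc hw).2 fun t hct htl => haw t (hav.le.trans hct) htl⟩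
    rw [prefixOrder_of_notMem hv, prefixOrder_of_notMem hw] at hvw
    have hfvw : f v < f w := by omega
    have hbv : ∀ t, a ≤ t → t ≤ l₂ → f (b t) < f v := fun t hat htl =>
      h.apply_lt_of_notMem_of_le hG hB hiF hf hfi hv (hia.le.trans hat) htl
    refine ⟨(hB.adj_pruneCompletion_iff ha hv).2 fun t hat htl =>
      (hf.2 _ v w (hbv t hat htl) hfvw (haw t hat htl)).1, ?_⟩
    exact (adj_pruneCompletion_iff_of_notMem hv hw).2
      (hf.2 _ v w (hbv a le_rfl ha) hfvw (haw a le_rfl ha)).2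

end Prefix

/-- For a 1-branch with `|B^R| ≥ 2k + 1`, every `k`-completion `F` can be
shrunk to a `k`-completion `F' ⊆ F` such that, for some vertex `b i` among
the `2k + 1` last vertices of `B^R` and `l₂` the maximal index with
`b i` adjacent to `b l₂`, the graph `G + F'` has an umbrella ordering whose
first vertices are exactly `b 0, …, b l₂` in this order. -/
theorem one_branch_completion [Fintype V] (G : SimpleGraph V)
    (hG : G.Connected) (k p : ℕ) (b : Fin p → V) (R C : Set V) (l : Fin p)
    (hB : OneBranch G b R C l)
    (hsize : 2 * k + 1 ≤ l.val)
    (F : Finset (Sym2 V)) (hF : IsKCompletion G k F) :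
    ∃ F' : Finset (Sym2 V), F' ⊆ F ∧ IsKCompletion G k F' ∧
      ∃ i : Fin p, l.val ≤ i.val + (2 * k + 1) ∧ i < l ∧
        ∃ l₂ : Fin p,
          G.Adj (b i) (b l₂) ∧ (∀ j : Fin p, G.Adj (b i) (b j) → j ≤ l₂) ∧
          ∃ f : V → ℕ, IsUmbrellaOrdering (addEdges G F') f ∧
            (∀ s t : Fin p, s ≤ l₂ → t ≤ l₂ → (s < t ↔ f (b s) < f (b t))) ∧
            (∀ v : V, v ∉ b '' {j : Fin p | j ≤ l₂} →
              ∀ s : Fin p, s ≤ l₂ → f (b s) < f v) := by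
  classical
  -- The fill edges touch at most `2k` of the last `2k + 1` vertices of `B^R`.
  obtain ⟨_, hv, hvF⟩ := exists_mem_forall_notMem_of_card_lt F
      ((Finset.Ico (⟨l - (2 * k + 1), by omega⟩ : Fin p) l).image b) <| by
    simp only [Finset.card_image_of_injective _ hB.inj, Fin.card_Ico]
    have := hF.2
    omega
  obtain ⟨i, hi, rfl⟩ := Finset.mem_image.1 hv
  obtain ⟨hi₁, hil⟩ := Finset.mem_Ico.1 hi
  obtain ⟨l₂, hl₂⟩ := hB.exists_isLastNeighbor hil
  obtain ⟨f₀, hf₀⟩ := hF.1.2.2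
  obtain ⟨f, hf, hfi⟩ := hf₀.exists_lt (hB.inj.ne hl₂.lt.ne)
  have hg := hl₂.isUmbrellaOrdering_prefixOrder hG hB hvF hf hfi
  refine ⟨_, pruneCompletion_subset, hF.of_subset pruneCompletion_subset ⟨_, hg⟩, i,
    by simp only [Fin.le_def] at hi₁; omega, hil, l₂, hl₂.adj, fun _ => hl₂.le_of_adj hB.inj,
    _, hg, fun s t hs ht => ?_, fun v hv s hs => prefixOrder_lt hB.inj hs hv⟩
  rw [prefixOrder_apply hB.inj hs, prefixOrder_apply hB.inj ht, Fin.lt_def]
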